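/- arXiv:1401.7563 — 2 statements merged into one kernel-verified Lean document; each statement's English description precedes it below -/
import Mathlib

section
/- Let M be a globally hyperbolic spacetime with a foliation M_Σ = ℝ × Σ induced by a spacelike Cauchy surface Σ. If f : ℝ × Σ → ℝ is a smooth function whose support is spacelike compact (i.e., contained in J_M(K) for some compact K ⊆ M), then the function f̃(t,x) = ∫₀ᵗ f(s,x) ds also has spacelike compact support. -/
open MeasureTheory

/-- A globally hyperbolic spacetime presented through the foliation
`M_Σ = ℝ × Σ` induced by a spacelike Cauchy surface `Σ` (with underlying set
`S`), as provided by the splitting theorem.  The data consists of the causal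
future `J⁺` and causal past `J⁻` of subsets, together with the predicate of
being a smooth function on `M_Σ`.  The axioms record that the vertical lines
`s ↦ (s, x)` are timelike curves and that each slice `{t} × Σ` is a spacelike
Cauchy surface, hence meets the causal shadow `J(K) = J⁺(K) ∪ J⁻(K)` of a
compact set `K` in a compact set. -/
structure FoliatedSpacetime (S : Type*) [TopologicalSpace S] where
  /-- causal future of a subset -/
  Jp : Set (ℝ × S) → Set (ℝ × S)
  /-- causal past of a subset -/
  Jm : Set (ℝ × S) → Set (ℝ × S)
  subset_Jp : ∀ A, A ⊆ Jp A
  subset_Jm : ∀ A, A ⊆ Jm A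
  Jp_mono : ∀ {A B}, A ⊆ B → Jp A ⊆ Jp B
  Jm_mono : ∀ {A B}, A ⊆ B → Jm A ⊆ Jm B
  Jp_idem : ∀ A, Jp (Jp A) = Jp A
  Jm_idem : ∀ A, Jm (Jm A) = Jm A
  /-- moving forwards along a vertical line stays in the causal future -/
  Jp_vertical : ∀ A (t t' : ℝ) (x : S), (t, x) ∈ Jp A → t ≤ t' → (t', x) ∈ Jp A
  /-- moving backwards along a vertical line stays in the causal past -/
  Jm_vertical : ∀ A (t t' : ℝ) (x : S), (t, x) ∈ Jm A → t' ≤ t → (t', x) ∈ Jm A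
  /-- each slice `{t} × Σ` is a spacelike Cauchy surface and intersects the
  causal shadow of a compact set in a compact set -/
  slice_inter_compact : ∀ {K : Set (ℝ × S)}, IsCompact K → ∀ t : ℝ,
    IsCompact ({p : ℝ × S | p.1 = t} ∩ (Jp K ∪ Jm K))
  /-- smooth functions on `M_Σ = ℝ × Σ` -/
  Smooth : (ℝ × S → ℝ) → Prop

namespace FoliatedSpacetime

variable {S : Type*} [TopologicalSpace S]

/-- `J(A) = J⁺(A) ∪ J⁻(A)`. -/
def J (X : FoliatedSpacetime S) (A : Set (ℝ × S)) : Set (ℝ × S) := X.Jp A ∪ X.Jm A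

/-- A function on `M_Σ` has spacelike compact support if its support is
contained in `J(K)` for some compact `K`. -/
def HasSCSupport (X : FoliatedSpacetime S) (f : ℝ × S → ℝ) : Prop :=
  ∃ K : Set (ℝ × S), IsCompact K ∧ tsupport f ⊆ X.J K

/-- A function on `M_Σ` has timelike compact support if its support meets
`J⁻(K)` and `J⁺(K)` in a compact set, for every compact `K`. -/
def HasTCSupport (X : FoliatedSpacetime S) (f : ℝ × S → ℝ) : Prop :=
  ∀ K : Set (ℝ × S), IsCompact K →
    IsCompact (tsupport f ∩ X.Jm K) ∧ IsCompact (tsupport f ∩ X.Jp K)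

end FoliatedSpacetime

open FoliatedSpacetime in
/-- On a globally hyperbolic spacetime foliated as
`M_Σ = ℝ × Σ`, if `f` is a smooth function with spacelike compact support,
then `f̃ (t, x) = ∫_0^t f (s, x) ds` also has spacelike compact support. -/
theorem timeIntegral_hasSCSupport {S : Type*} [TopologicalSpace S]
    (X : FoliatedSpacetime S) (f : ℝ × S → ℝ)
    (hf : X.Smooth f) (hsc : X.HasSCSupport f) :
    X.HasSCSupport (fun p : ℝ × S => ∫ s in (0:ℝ)..p.1, f (s, p.2)) := by
  obtain ⟨K, hK, hTK⟩ := hsc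
  set T := tsupport f with hT
  set K₀ : Set (ℝ × S) := {p : ℝ × S | p.1 = 0} ∩ (X.Jp K ∪ X.Jm K) with hK₀def
  have hK₀ : IsCompact K₀ := X.slice_inter_compact hK 0
  refine ⟨K ∪ K₀, hK.union hK₀, ?_⟩
  set A : Set (ℝ × S) := {p | ∃ s ∈ Set.uIcc (0:ℝ) p.1, (s, p.2) ∈ T} with hAdef
  -- `A` is closed
  have hA_closed : IsClosed A := by
    rw [← isOpen_compl_iff, isOpen_iff_forall_mem_open]
    rintro ⟨t₀, x₀⟩ hp
    have htube : Set.uIcc (0:ℝ) t₀ ×ˢ ({x₀} : Set S) ⊆ Tᶜ := by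
      rintro ⟨s, y⟩ ⟨hs, hy⟩
      simp only [Set.mem_singleton_iff] at hy
      subst hy
      intro hsT
      exact hp ⟨s, hs, hsT⟩
    obtain ⟨u, v, hu, hv, hsu, hxv, huv⟩ :=
      generalized_tube_lemma isCompact_uIcc isCompact_singleton
        (isClosed_tsupport f).isOpen_compl htube
    obtain ⟨δ, hδ, hthick⟩ :=
      (isCompact_uIcc (a := (0:ℝ)) (b := t₀)).exists_thickening_subset_open hu hsu
    refine ⟨Metric.ball t₀ δ ×ˢ v, ?_, (Metric.isOpen_ball).prod hv, ?_⟩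
    · rintro ⟨t', x'⟩ ⟨ht', hx'⟩ ⟨s, hs, hsT⟩
      have hsu' : s ∈ u := by
        apply hthick
        rw [Metric.mem_thickening_iff]
        have := Set.uIcc_subset_uIcc_union_uIcc (a := (0:ℝ)) (b := t₀) (c := t') hs
        rcases this with h | h
        · exact ⟨s, h, by simpa using hδ⟩
        · refine ⟨t₀, Set.right_mem_uIcc, ?_⟩
          rw [Set.mem_uIcc] at h
          rw [Real.dist_eq]
          rw [Metric.mem_ball, Real.dist_eq] at ht'
          rcases h with ⟨h1, h2⟩ | ⟨h1, h2⟩ <;> rw [abs_sub_lt_iff] <;>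
            constructor <;> rw [abs_sub_lt_iff] at ht' <;> linarith [ht'.1, ht'.2]
      exact huv (show (s, x') ∈ u ×ˢ v from ⟨hsu', hx'⟩) hsT
    · exact ⟨Metric.mem_ball_self hδ, hxv rfl⟩
  -- the support of the time integral is contained in `A`
  have hsupp : Function.support (fun p : ℝ × S => ∫ s in (0:ℝ)..p.1, f (s, p.2)) ⊆ A := by
    intro p hp
    by_contra hpA
    apply hp
    have hzero : Set.EqOn (fun s => f (s, p.2)) (fun _ => (0:ℝ)) (Set.uIcc 0 p.1) := by
      intro s hs
      by_contra hne
      exact hpA ⟨s, hs, subset_tsupport _ hne⟩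
    calc (∫ s in (0:ℝ)..p.1, f (s, p.2)) = ∫ s in (0:ℝ)..p.1, (0:ℝ) :=
          intervalIntegral.integral_congr hzero
      _ = 0 := intervalIntegral.integral_zero
  have hts : tsupport (fun p : ℝ × S => ∫ s in (0:ℝ)..p.1, f (s, p.2)) ⊆ A :=
    closure_minimal hsupp hA_closed
  refine hts.trans ?_
  -- finally, `A ⊆ J (K ∪ K₀)`
  rintro ⟨t, x⟩ ⟨s, hs, hsT⟩
  have hsJ : (s, x) ∈ X.Jp K ∪ X.Jm K := hTK hsT
  rw [Set.mem_uIcc] at hs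
  rcases hsJ with hsJ | hsJ
  · rcases le_or_gt s t with hst | hst
    · exact Or.inl (X.Jp_mono Set.subset_union_left (X.Jp_vertical K s t x hsJ hst))
    · -- t < s, hence s ≤ 0 and t < 0
      have hs0 : s ≤ 0 := by rcases hs with ⟨h1, h2⟩ | ⟨h1, h2⟩ <;> linarith
      have h0 : (0, x) ∈ X.Jp K := X.Jp_vertical K s 0 x hsJ hs0
      have hmem : ((0:ℝ), x) ∈ K ∪ K₀ := Or.inr ⟨rfl, Or.inl h0⟩
      exact Or.inr (X.Jm_vertical (K ∪ K₀) 0 t x (X.subset_Jm _ hmem) (by linarith))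
  · rcases le_or_gt t s with hst | hst
    · exact Or.inr (X.Jm_mono Set.subset_union_left (X.Jm_vertical K s t x hsJ hst))
    · -- s < t, hence 0 ≤ s and 0 < t
      have hs0 : 0 ≤ s := by rcases hs with ⟨h1, h2⟩ | ⟨h1, h2⟩ <;> linarith
      have h0 : (0, x) ∈ X.Jm K := X.Jm_vertical K s 0 x hsJ hs0
      have hmem : ((0:ℝ), x) ∈ K ∪ K₀ := Or.inr ⟨rfl, Or.inr h0⟩
      exact Or.inl (X.Jp_vertical (K ∪ K₀) 0 t x (X.subset_Jp _ hmem) (by linarith))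
end

section
/- Let M be a globally hyperbolic spacetime, δ the codifferential, d the differential, and G_± the advanced/retarded Green operators of the Laplace–de Rham operator □ = δd + dδ. Then every solution A ∈ Ω^k(M) of δdA = 0 is gauge equivalent to a solution in Lorenz gauge: there exists χ ∈ Ω^{k−1}(M) such that δ(A + dχ) = 0; explicitly χ = −δ(G_+(f_+ A) + G_−(f_− A)) works, where {f_+, f_−} is a partition of unity with f_+ = 1 on a past compact region and f_− = 1 on a future compact region. -/
open MeasureTheory

/-- Abstract calculus of differential forms on an `m`-dimensional globally
hyperbolic spacetime `M`, identified via a foliation induced by a spacelike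
Cauchy surface `Σ` with `M_Σ = ℝ × Σ`.  Here `S` is the underlying set of the
Cauchy surface `Σ`, `Om k` is the space of smooth `k`-forms on `M` and `OS k`
the space of smooth `k`-forms on `Σ`.  The fields record the exterior
differential `d`, the codifferential `δ`, the submodules of forms with compact
(`cpt`), spacelike compact (`sc`), timelike compact (`tc`), past compact (`pc`)
and future compact (`fc`) support, the pullbacks along the projection
`π : ℝ × Σ → Σ` and the section `s : Σ → ℝ × Σ`, `x ↦ (0, x)`, multiplication
of forms by functions, wedging with `dt`, the Poincaré pairings
`⟨α, β⟩ = ∫_M α ∧ β` and `(α, β) = ∫_M α ∧ *β`, and the Laplace–de Rham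
operator `□ = δd + dδ` with its (extended) Green operators. -/
structure GHForms (m : ℕ) (S : Type*) (Om OS : ℕ → Type*)
    [∀ k, AddCommGroup (Om k)] [∀ k, Module ℝ (Om k)]
    [∀ k, AddCommGroup (OS k)] [∀ k, Module ℝ (OS k)] : Type _ where
  /-- the exterior differential on `M` -/
  d : ∀ k, Om k →ₗ[ℝ] Om (k + 1)
  d_d : ∀ k x, d (k + 1) (d k x) = 0
  /-- the codifferential on `M` -/
  δ : ∀ k, Om (k + 1) →ₗ[ℝ] Om k
  δ_δ : ∀ k x, δ k (δ (k + 1) x) = 0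
  /-- the exterior differential on `Σ` -/
  dS : ∀ k, OS k →ₗ[ℝ] OS (k + 1)
  dS_dS : ∀ k x, dS (k + 1) (dS k x) = 0
  /-- forms of degree above the dimension vanish -/
  top : ∀ k, m < k → ∀ x : Om k, x = 0
  /-- `Σ` has dimension `m - 1` -/
  topS : ∀ k, m ≤ k → ∀ x : OS k, x = 0
  /-- forms with compact / spacelike compact / timelike compact /
  past compact / future compact support -/
  cpt : ∀ k, Submodule ℝ (Om k)
  sc : ∀ k, Submodule ℝ (Om k)
  tc : ∀ k, Submodule ℝ (Om k)
  pc : ∀ k, Submodule ℝ (Om k)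
  fc : ∀ k, Submodule ℝ (Om k)
  /-- forms with compact support on `Σ` -/
  cptS : ∀ k, Submodule ℝ (OS k)
  cpt_le_sc : ∀ k, cpt k ≤ sc k
  cpt_le_tc : ∀ k, cpt k ≤ tc k
  tc_le_pc : ∀ k, tc k ≤ pc k
  tc_le_fc : ∀ k, tc k ≤ fc k
  /-- a spacelike compact and timelike compact overlap is compact -/
  sc_inf_tc_le_cpt : ∀ k, sc k ⊓ tc k ≤ cpt k
  d_cpt : ∀ k x, x ∈ cpt k → d k x ∈ cpt (k + 1)
  d_sc : ∀ k x, x ∈ sc k → d k x ∈ sc (k + 1)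
  d_tc : ∀ k x, x ∈ tc k → d k x ∈ tc (k + 1)
  δ_cpt : ∀ k x, x ∈ cpt (k + 1) → δ k x ∈ cpt k
  δ_sc : ∀ k x, x ∈ sc (k + 1) → δ k x ∈ sc k
  δ_tc : ∀ k x, x ∈ tc (k + 1) → δ k x ∈ tc k
  dS_cptS : ∀ k x, x ∈ cptS k → dS k x ∈ cptS (k + 1)
  /-- pullback along the projection `π : ℝ × Σ → Σ` -/
  pullπ : ∀ k, OS k →ₗ[ℝ] Om k
  /-- pullback along the section `s : Σ → ℝ × Σ`, `x ↦ (0, x)` -/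
  pulls : ∀ k, Om k →ₗ[ℝ] OS k
  pullπ_d : ∀ k x, pullπ (k + 1) (dS k x) = d k (pullπ k x)
  pulls_d : ∀ k x, pulls (k + 1) (d k x) = dS k (pulls k x)
  pullπ_sc : ∀ k x, x ∈ cptS k → pullπ k x ∈ sc k
  pulls_cptS : ∀ k x, x ∈ sc k → pulls k x ∈ cptS k
  pulls_pullπ : ∀ k x, pulls k (pullπ k x) = x
  /-- multiplication of a form on `M = ℝ × Σ` by a function -/
  fmul : ∀ k, (ℝ × S → ℝ) →ₗ[ℝ] Om k →ₗ[ℝ] Om k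
  /-- multiplication of a form on `Σ` by a function -/
  fmulS : ∀ k, (S → ℝ) →ₗ[ℝ] OS k →ₗ[ℝ] OS k
  /-- wedge product with `dt` on the right -/
  wdt : ∀ k, Om k →ₗ[ℝ] Om (k + 1)
  /-- smooth functions on `M` with spacelike compact support -/
  scC : Submodule ℝ (ℝ × S → ℝ)
  /-- smooth functions on `M` with timelike compact support -/
  tcC : Submodule ℝ (ℝ × S → ℝ)
  fmul_sc : ∀ k f x, f ∈ scC → fmul k f x ∈ sc k
  fmul_tc : ∀ k f x, f ∈ tcC → fmul k f x ∈ tc k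
  /-- every spacelike compact form is a linear combination of forms of type
  `(π^*φ) f` and `(π^*ψ) h ∧ dt` with spacelike compact coefficients -/
  sc_span : ∀ k, (sc (k + 1) : Set (Om (k + 1))) ⊆
    (Submodule.span ℝ
      ({x | ∃ φ f, f ∈ scC ∧ x = fmul (k + 1) f (pullπ (k + 1) φ)} ∪
       {x | ∃ ψ h, h ∈ scC ∧ x = wdt k (fmul k h (pullπ k ψ))}) : Set (Om (k + 1)))
  /-- every timelike compact form is a linear combination of forms of type
  `(π^*φ) f` and `(π^*ψ) h ∧ dt` with timelike compact coefficients -/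
  tc_span : ∀ k, (tc (k + 1) : Set (Om (k + 1))) ⊆
    (Submodule.span ℝ
      ({x | ∃ φ f, f ∈ tcC ∧ x = fmul (k + 1) f (pullπ (k + 1) φ)} ∪
       {x | ∃ ψ h, h ∈ tcC ∧ x = wdt k (fmul k h (pullπ k ψ))}) : Set (Om (k + 1)))
  /-- the wedge-and-integrate pairing `⟨α, β⟩ = ∫_M α ∧ β` (defined for forms
  whose supports have compact overlap, in particular for a spacelike compact
  form against a timelike compact one) -/
  pair : ∀ k l, Om k →ₗ[ℝ] Om l →ₗ[ℝ] ℝ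
  /-- the pairing `⟨φ, ψ⟩ = ∫_Σ φ ∧ ψ` on the Cauchy surface -/
  pairS : ∀ k l, OS k →ₗ[ℝ] OS l →ₗ[ℝ] ℝ
  /-- the metric pairing `(α, β) = ∫_M α ∧ *β` between `k`-forms -/
  pairδ : ∀ k, Om k →ₗ[ℝ] Om k →ₗ[ℝ] ℝ
  /-- non-degeneracy of `(·,·)` between compactly supported and all forms -/
  pairδ_nondeg : ∀ k (β : Om k), (∀ α, α ∈ cpt k → pairδ k α β = 0) → β = 0
  /-- `δ` is the formal adjoint of `d` -/
  pairδ_adj : ∀ k α β, (α ∈ cpt (k + 1) ∨ β ∈ cpt k) →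
    pairδ k (δ k α) β = pairδ (k + 1) α (d k β)
  /-- the Laplace–de Rham operator `□ = δd + dδ` -/
  box : ∀ k, Om k →ₗ[ℝ] Om k
  box_zero : ∀ x, box 0 x = δ 0 (d 0 x)
  box_succ : ∀ k x, box (k + 1) x = δ (k + 1) (d (k + 1) x) + d k (δ k x)
  /-- the causal propagator `G = G₊ − G₋` (extended to timelike compact forms)
  and the advanced/retarded Green operators `G₊`, `G₋` (extended to past/future
  compact forms) -/
  G : ∀ k, Om k →ₗ[ℝ] Om k
  Gp : ∀ k, Om k →ₗ[ℝ] Om k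
  Gm : ∀ k, Om k →ₗ[ℝ] Om k
  G_eq : ∀ k x, G k x = Gp k x - Gm k x
  G_sc : ∀ k x, x ∈ tc k → G k x ∈ sc k
  box_Gp : ∀ k x, x ∈ pc k → box k (Gp k x) = x
  Gp_box : ∀ k x, x ∈ pc k → Gp k (box k x) = x
  box_Gm : ∀ k x, x ∈ fc k → box k (Gm k x) = x
  Gm_box : ∀ k x, x ∈ fc k → Gm k (box k x) = x
  G_d : ∀ k x, x ∈ tc k → G (k + 1) (d k x) = d k (G k x)
  G_δ : ∀ k x, x ∈ tc (k + 1) → G k (δ k x) = δ k (G (k + 1) x)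
  /-- placeholder proposition expressing that `M` admits a finite good cover -/
  goodCover : Prop

namespace GHForms

variable {m : ℕ} {S : Type*} {Om OS : ℕ → Type*}
    [∀ k, AddCommGroup (Om k)] [∀ k, Module ℝ (Om k)]
    [∀ k, AddCommGroup (OS k)] [∀ k, Module ℝ (OS k)]

/-- The codifferential `Om^k → Om^{k-1}`, as the zero map in degree `0`. -/
def cod (X : GHForms m S Om OS) : ∀ k, Om k →ₗ[ℝ] Om (k - 1)
  | 0 => 0
  | (k + 1) => X.δ k

end GHForms

open GHForms in
/-- Lorenz gauge fixing: every solution `A ∈ Ω^{k+1}(M)` of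
`δdA = 0` on a globally hyperbolic spacetime is gauge equivalent to a solution
in Lorenz gauge, and explicitly `χ = −δ(G₊(f₊ A) + G₋(f₋ A))` works, where
`{f₊, f₋}` is a partition of unity such that `f₊ A` has past compact support
and `f₋ A` has future compact support. -/
theorem lorenz_gauge_fixing {m : ℕ} {S : Type*} {Om OS : ℕ → Type*}
    [∀ k, AddCommGroup (Om k)] [∀ k, Module ℝ (Om k)]
    [∀ k, AddCommGroup (OS k)] [∀ k, Module ℝ (OS k)]
    (X : GHForms m S Om OS) (k : ℕ) (A : Om (k + 1))
    (hA : X.δ (k + 1) (X.d (k + 1) A) = 0)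
    (fp fm : Om (k + 1) →ₗ[ℝ] Om (k + 1))
    (hpart : ∀ x, fp x + fm x = x)
    (hfp : fp A ∈ X.pc (k + 1)) (hfm : fm A ∈ X.fc (k + 1)) :
    ∃ χ : Om k, X.δ k (A + X.d k χ) = 0 ∧
      χ = -(X.δ k (X.Gp (k + 1) (fp A) + X.Gm (k + 1) (fm A))) := by
  set B := X.Gp (k + 1) (fp A) + X.Gm (k + 1) (fm A) with hB
  refine ⟨-(X.δ k B), ?_, rfl⟩
  have hbox : X.box (k + 1) B = A := by
    rw [hB, map_add, X.box_Gp (k + 1) (fp A) hfp, X.box_Gm (k + 1) (fm A) hfm,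
      hpart A]
  have hsucc := X.box_succ k B
  rw [hbox] at hsucc
  have hd : X.d k (X.δ k B) = A - X.δ (k + 1) (X.d (k + 1) B) :=
    eq_sub_of_add_eq' hsucc.symm
  rw [map_neg, hd]
  have : A + -(A - X.δ (k + 1) (X.d (k + 1) B)) = X.δ (k + 1) (X.d (k + 1) B) := by
    abel
  rw [this, X.δ_δ]
end
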